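/- Let A and B be adapted, increasing, right-continuous processes with left limits on a filtered probability space, and suppose there exist r > 0 and α > 0 such that E(A_{T-} − A_{S-})^r ≤ α · E[B_{T-}^r 1_{{S < T}}] for all stopping times S ≤ T. Then for every moderate function F (continuous increasing, F(0)=0, with F(2λ) ≤ c F(λ) for some c and all λ > 0), one has E F(A_∞) ≤ C(r, α, F) · E F(B_∞). -/

import Mathlib

/-!
Good-λ argument. Let `S` be the time `A` reaches `λ` and `T` the time `B` reaches `δλ` (both
capped). On `{A_∞ > 2λ, B_∞ < δλ}` the increment `A_{T-} - A_{S-}` is at least `λ`, while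
`B_{T-} ≤ δλ` and `{S < T} ⊆ {A_∞ ≥ λ}`, so the hypothesis yields
`P(A_∞ > 2λ) ≤ α δ^r P(A_∞ ≥ λ) + P(B_∞ ≥ δλ)`.
Summing over the dyadic levels `λ = 2^(j-1)` against the increments `F(2^(j+1)) - F(2^j)` and
using `F(4x) ≤ c² F(x)`, with `δ = 2^(-m)`, gives
`E F(A_∞) ≤ α δ^r c² E F(A_∞) + c^(m+2) E F(B_∞)`. For `m` large the first term is absorbed,
once `A` is truncated at a finite level to make `E F(A_∞)` finite.
-/

open MeasureTheory ENNReal Filter Set NNReal Topology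

section Telescoping

variable {a : ℤ → ℝ≥0∞}

theorem Monotone.sum_range_sub_add (ha : Monotone a) (m : ℤ) (n : ℕ) :
    ∑ i ∈ Finset.range n, (a (m + i + 1) - a (m + i)) + a m = a (m + n) := by
  induction n with
  | zero => simp
  | succ n ih =>
    rw [Finset.sum_range_succ, add_right_comm, ih, add_tsub_cancel_of_le (ha (by omega))]
    push_cast
    rw [add_assoc]

theorem Monotone.le_tsum_indicator_sub (ha : Monotone a) (ha₀ : Tendsto a atBot (𝓝 0))
    {t : Set ℤ} {k : ℤ} (hkt : Iic k ⊆ t) :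
    a (k + 1) ≤ ∑' j, t.indicator (fun j => a (j + 1) - a j) j := by
  refine ENNReal.le_of_forall_pos_le_add fun ε hε _ => ?_
  obtain ⟨m₀, hm₀⟩ := eventually_atBot.mp (ha₀.eventually (gt_mem_nhds (ENNReal.coe_pos.mpr hε)))
  set m := min m₀ k
  obtain ⟨n, hn⟩ : ∃ n : ℕ, m + n = k + 1 := ⟨(k + 1 - m).toNat, by omega⟩
  calc a (k + 1) = ∑ i ∈ Finset.range n, t.indicator (fun j => a (j + 1) - a j) (m + i) + a m := by
        rw [← hn, ← ha.sum_range_sub_add]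
        congr 1
        refine Finset.sum_congr rfl fun i hi =>
          (indicator_of_mem (hkt ?_) (fun j => a (j + 1) - a j)).symm
        simp only [Finset.mem_range] at hi
        simp only [mem_Iic]
        omega
    _ ≤ ∑' j, t.indicator (fun j => a (j + 1) - a j) j + ε := by
        gcongr
        · exact (ENNReal.sum_le_tsum _).trans
            (ENNReal.tsum_comp_le_tsum_of_injective (fun i j h => by simpa using h) _)
        · exact (hm₀ m (min_le_left _ _)).le

theorem Monotone.tsum_indicator_sub_le (ha : Monotone a) {t : Set ℤ} {C : ℝ≥0∞}
    (hC : ∀ k ∈ t, a (k + 1) ≤ C) :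
    ∑' j, t.indicator (fun j => a (j + 1) - a j) j ≤ C := by
  classical
  refine ENNReal.summable.tsum_le_of_sum_le fun s => ?_
  rw [Finset.sum_indicator_eq_sum_filter]
  set s' := s.filter (· ∈ t)
  rcases s'.eq_empty_or_nonempty with h | h
  · simp [h]
  set m := s'.min' h
  obtain ⟨n, hn⟩ : ∃ n : ℕ, m + n = s'.max' h + 1 :=
    ⟨(s'.max' h + 1 - m).toNat, by have := s'.min'_le_max' h; omega⟩
  have hsub : s' ⊆ (Finset.range n).image (fun i : ℕ => m + i) := fun j hj => by
    have := s'.min'_le j hj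
    have := s'.le_max' j hj
    simp only [Finset.mem_image, Finset.mem_range]
    exact ⟨(j - m).toNat, by omega, by omega⟩
  calc ∑ j ∈ s', (a (j + 1) - a j)
        ≤ ∑ j ∈ (Finset.range n).image (fun i : ℕ => m + i), (a (j + 1) - a j) :=
        Finset.sum_le_sum_of_subset hsub
    _ ≤ ∑ i ∈ Finset.range n, (a (m + i + 1) - a (m + i)) + a m := by
        rw [Finset.sum_image fun i _ j _ h => by simpa using h]
        exact le_self_add
    _ = a (s'.max' h + 1) := by rw [ha.sum_range_sub_add, hn]
    _ ≤ C := hC _ (Finset.mem_filter.mp (s'.max'_mem h)).2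

end Telescoping

theorem ENNReal.tendsto_two_zpow_atBot : Tendsto (fun j : ℤ => (2 : ℝ≥0∞) ^ j) atBot (𝓝 0) := by
  refine ENNReal.tendsto_nhds_zero.mpr fun ε hε => ?_
  obtain ⟨k, hk⟩ : ∃ k : ℤ, (2 : ℝ≥0∞) ^ k ≤ ε := by
    rcases eq_or_ne ε ⊤ with rfl | hε'
    · exact ⟨0, le_top⟩
    · obtain ⟨k, hk, -⟩ := exists_mem_Ioc_zpow hε.ne' hε' one_lt_two ofNat_ne_top
      exact ⟨k, hk.le⟩
  exact eventually_atBot.mpr ⟨k, fun j hj => (ENNReal.zpow_le_of_le one_le_two hj).trans hk⟩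

noncomputable def dyadicIncrement (F : ℝ≥0∞ → ℝ≥0∞) (j : ℤ) : ℝ≥0∞ := F (2 ^ (j + 1)) - F (2 ^ j)

section Moderate

variable {F : ℝ≥0∞ → ℝ≥0∞}

theorem apply_two_pow_mul_le {c : ℝ≥0∞} (hc : ∀ x, F (2 * x) ≤ c * F x) (k : ℕ) (x : ℝ≥0∞) :
    F (2 ^ k * x) ≤ c ^ k * F x := by
  induction k with
  | zero => simp
  | succ k ih =>
    calc F (2 ^ (k + 1) * x) = F (2 * (2 ^ k * x)) := by ring_nf
      _ ≤ c * (c ^ k * F x) := (hc _).trans (mul_le_mul_right ih c)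
      _ = c ^ (k + 1) * F x := by ring

theorem tendsto_apply_two_zpow_atBot (hFcont : ContinuousAt F 0) (hF0 : F 0 = 0) :
    Tendsto (fun j : ℤ => F (2 ^ j)) atBot (𝓝 0) :=
  hF0 ▸ hFcont.tendsto.comp ENNReal.tendsto_two_zpow_atBot

theorem Monotone.comp_two_zpow (hFmono : Monotone F) : Monotone fun j : ℤ => F (2 ^ j) :=
  fun _ _ h => hFmono (ENNReal.zpow_le_of_le one_le_two h)

theorem apply_ne_top_of_doubling (hFmono : Monotone F) (hFcont : ContinuousAt F 0) (hF0 : F 0 = 0)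
    {c : ℝ≥0} (hc : ∀ x, F (2 * x) ≤ c * F x) {x : ℝ≥0∞} (hx : x ≠ ⊤) : F x ≠ ⊤ := by
  obtain ⟨n, hn⟩ := ENNReal.exists_nat_gt hx
  obtain ⟨j₀, hj₀⟩ := eventually_atBot.mp
    ((tendsto_apply_two_zpow_atBot hFcont hF0).eventually (gt_mem_nhds one_pos))
  set j := min j₀ 0
  obtain ⟨k, hk⟩ : ∃ k : ℕ, j + k = n := ⟨(n - j).toNat, by omega⟩
  have hxk : x ≤ 2 ^ k * 2 ^ j := by
    rw [← zpow_natCast, ← ENNReal.zpow_add two_ne_zero ofNat_ne_top, add_comm, hk, zpow_natCast]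
    exact hn.le.trans (by exact_mod_cast (Nat.lt_two_pow_self).le)
  refine ne_top_of_le_ne_top ?_ ((hFmono hxk).trans (apply_two_pow_mul_le hc k _))
  exact mul_ne_top (pow_ne_top coe_ne_top) (hj₀ j (min_le_left _ _)).ne_top

theorem le_tsum_dyadicIncrement (hFmono : Monotone F) (hFcont : Continuous F) (hF0 : F 0 = 0)
    (x : ℝ≥0∞) : F x ≤ ∑' j, {j | 2 ^ j < x}.indicator (dyadicIncrement F) j := by
  have ha := hFmono.comp_two_zpow
  have ha₀ := tendsto_apply_two_zpow_atBot hFcont.continuousAt hF0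
  rcases eq_or_ne x 0 with rfl | h₀
  · simp [hF0]
  rcases eq_or_ne x ⊤ with rfl | hx
  · refine le_of_tendsto' ((hFcont.tendsto ⊤).comp
      (ENNReal.tendsto_pow_atTop_nhds_top_iff.mpr one_lt_two)) fun n => ?_
    rw [Function.comp_apply, ← zpow_natCast, ← sub_add_cancel (n : ℤ) 1]
    exact ha.le_tsum_indicator_sub ha₀ fun j _ => ENNReal.zpow_lt_top two_ne_zero ofNat_ne_top j
  · obtain ⟨k, hk⟩ := exists_mem_Ioc_zpow h₀ hx one_lt_two ofNat_ne_top
    exact (hFmono hk.2).trans (ha.le_tsum_indicator_sub ha₀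
      fun j hj => (ENNReal.zpow_le_of_le one_le_two hj).trans_lt hk.1)

theorem tsum_dyadicIncrement_le (hFmono : Monotone F) {c : ℝ≥0∞} (hc : ∀ x, F (2 * x) ≤ c * F x)
    (l : ℕ) (x : ℝ≥0∞) :
    ∑' j, {j : ℤ | 2 ^ (j - l) ≤ x}.indicator (dyadicIncrement F) j ≤ c ^ (l + 1) * F x := by
  refine hFmono.comp_two_zpow.tsum_indicator_sub_le fun k hk =>
    (hFmono ?_).trans (apply_two_pow_mul_le hc _ x)
  calc (2 : ℝ≥0∞) ^ (k + 1) = 2 ^ (l + 1) * 2 ^ (k - l) := by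
        rw [← zpow_natCast, ← ENNReal.zpow_add two_ne_zero ofNat_ne_top]; push_cast; ring_nf
    _ ≤ 2 ^ (l + 1) * x := mul_le_mul_right hk _

end Moderate

theorem ENNReal.le_two_mul_of_le_inv_two_mul_add {a b : ℝ≥0∞} (ha : a ≠ ⊤) (h : a ≤ 2⁻¹ * a + b) :
    a ≤ 2 * b := by
  have hhalf : 2⁻¹ * a ≤ b := by
    refine ENNReal.le_of_add_le_add_left (mul_ne_top (inv_ne_top.2 two_ne_zero) ha) ?_
    rwa [← add_mul, ENNReal.inv_two_add_inv_two, one_mul]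
  calc a = 2 * (2⁻¹ * a) := by
        rw [← mul_assoc, ENNReal.mul_inv_cancel two_ne_zero ofNat_ne_top, one_mul]
    _ ≤ 2 * b := mul_le_mul_right hhalf 2

section Layers

variable {Ω : Type*} [MeasurableSpace Ω] {μ : Measure Ω} {X : Ω → ℝ≥0∞} {F : ℝ≥0∞ → ℝ≥0∞}

theorem lintegral_tsum_indicator_setOf (hX : Measurable X) {s : ℤ → Set ℝ≥0∞}
    (hs : ∀ j, MeasurableSet (s j)) (f : ℤ → ℝ≥0∞) :
    ∫⁻ ω, ∑' j, {j | X ω ∈ s j}.indicator f j ∂μ = ∑' j, f j * μ (X ⁻¹' s j) := by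
  have hmeas : ∀ j, AEMeasurable (fun ω => {j | X ω ∈ s j}.indicator f j) μ := fun j =>
    (measurable_const.indicator (hX (hs j)) :
      Measurable ((X ⁻¹' s j).indicator fun _ => f j)).aemeasurable
  rw [lintegral_tsum hmeas]
  exact tsum_congr fun j => lintegral_indicator_const_comp hX (hs j) (f j)

theorem lintegral_le_tsum_dyadicIncrement_mul (hFmono : Monotone F) (hFcont : Continuous F)
    (hF0 : F 0 = 0) (hX : Measurable X) :
    ∫⁻ ω, F (X ω) ∂μ ≤ ∑' j, dyadicIncrement F j * μ {ω | 2 ^ j < X ω} :=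
  calc ∫⁻ ω, F (X ω) ∂μ ≤ ∫⁻ ω, ∑' j, {j | X ω ∈ Ioi (2 ^ j)}.indicator (dyadicIncrement F) j ∂μ :=
        lintegral_mono fun ω => le_tsum_dyadicIncrement hFmono hFcont hF0 (X ω)
    _ = _ := lintegral_tsum_indicator_setOf hX (fun _ => measurableSet_Ioi) _

theorem tsum_dyadicIncrement_mul_le_lintegral (hFmono : Monotone F) {c : ℝ≥0∞}
    (hc : ∀ x, F (2 * x) ≤ c * F x) (hX : Measurable X) (l : ℕ) :
    ∑' j, dyadicIncrement F j * μ {ω | 2 ^ (j - l) ≤ X ω} ≤ c ^ (l + 1) * ∫⁻ ω, F (X ω) ∂μ :=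
  calc ∑' j, dyadicIncrement F j * μ {ω | 2 ^ (j - l) ≤ X ω}
      = ∫⁻ ω, ∑' j, {j : ℤ | X ω ∈ Ici (2 ^ (j - l))}.indicator (dyadicIncrement F) j ∂μ :=
        (lintegral_tsum_indicator_setOf hX (fun _ => measurableSet_Ici) _).symm
    _ ≤ ∫⁻ ω, c ^ (l + 1) * F (X ω) ∂μ :=
        lintegral_mono fun ω => tsum_dyadicIncrement_le hFmono hc l (X ω)
    _ = c ^ (l + 1) * ∫⁻ ω, F (X ω) ∂μ := lintegral_const_mul _ (hFmono.measurable.comp hX)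

end Layers

def GoodLambdaInequality {Ω : Type*} [MeasurableSpace Ω] (μ : Measure Ω) (X Y : Ω → ℝ≥0∞)
    (ε δ : ℝ≥0∞) : Prop :=
  ∀ lam : ℝ≥0∞, 0 < lam → lam ≠ ⊤ →
    μ {ω | 2 * lam < X ω} ≤ ε * μ {ω | lam ≤ X ω} + μ {ω | δ * lam ≤ Y ω}

namespace GoodLambdaInequality

variable {Ω : Type*} [MeasurableSpace Ω] {μ : Measure Ω} {X Y : Ω → ℝ≥0∞} {ε δ : ℝ≥0∞}
  {F : ℝ≥0∞ → ℝ≥0∞}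

theorem inf_const (h : GoodLambdaInequality μ X Y ε δ) (N : ℝ≥0∞) :
    GoodLambdaInequality μ (fun ω => X ω ⊓ N) Y ε δ := by
  intro lam hlam₀ hlam
  by_cases hN : 2 * lam < N
  · have hlamN : lam ≤ N := (le_mul_of_one_le_left' one_le_two).trans hN.le
    simpa only [lt_inf_iff, le_inf_iff, hN, hlamN, and_true] using h lam hlam₀ hlam
  · have hempty : {ω | 2 * lam < X ω ⊓ N} = ∅ :=
      eq_empty_of_forall_notMem fun ω hω => hN (lt_inf_iff.mp hω).2
    show μ {ω | 2 * lam < X ω ⊓ N} ≤ _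
    rw [hempty, measure_empty]
    exact zero_le

theorem lintegral_comp_le_of_ne_top {m : ℕ} (h : GoodLambdaInequality μ X Y ε (2 ^ (-(m : ℤ))))
    (hX : Measurable X) (hY : Measurable Y) (hFmono : Monotone F) (hFcont : Continuous F)
    (hF0 : F 0 = 0) {c : ℝ≥0∞} (hc : ∀ x, F (2 * x) ≤ c * F x) (hε : ε * c ^ 2 ≤ 2⁻¹)
    (hfin : ∫⁻ ω, F (X ω) ∂μ ≠ ⊤) :
    ∫⁻ ω, F (X ω) ∂μ ≤ 2 * c ^ (m + 2) * ∫⁻ ω, F (Y ω) ∂μ := by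
  have hlevel : ∀ j : ℤ, μ {ω | 2 ^ j < X ω}
      ≤ ε * μ {ω | 2 ^ (j - (1 : ℕ)) ≤ X ω} + μ {ω | 2 ^ (j - (m + 1 : ℕ)) ≤ Y ω} := by
    intro j
    have hj := h (2 ^ (j - 1)) (ENNReal.zpow_pos two_ne_zero ofNat_ne_top _)
      (ENNReal.zpow_lt_top two_ne_zero ofNat_ne_top _).ne
    have hdouble : (2 : ℝ≥0∞) * 2 ^ (j - 1) = 2 ^ j :=
      calc (2 : ℝ≥0∞) * 2 ^ (j - 1) = 2 ^ (1 : ℤ) * 2 ^ (j - 1) := by rw [zpow_one]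
        _ = 2 ^ j := by rw [← ENNReal.zpow_add two_ne_zero ofNat_ne_top]; ring_nf
    have hshift : (2 : ℝ≥0∞) ^ (-(m : ℤ)) * 2 ^ (j - 1) = 2 ^ (j - (m + 1 : ℕ)) := by
      rw [← ENNReal.zpow_add two_ne_zero ofNat_ne_top]; push_cast; ring_nf
    rw [hdouble, hshift] at hj
    simpa only [Nat.cast_one] using hj
  rw [mul_assoc]
  refine ENNReal.le_two_mul_of_le_inv_two_mul_add hfin ?_
  calc ∫⁻ ω, F (X ω) ∂μ ≤ ∑' j, dyadicIncrement F j * μ {ω | 2 ^ j < X ω} :=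
        lintegral_le_tsum_dyadicIncrement_mul hFmono hFcont hF0 hX
    _ ≤ ∑' j, dyadicIncrement F j * (ε * μ {ω | 2 ^ (j - (1 : ℕ)) ≤ X ω}
          + μ {ω | 2 ^ (j - (m + 1 : ℕ)) ≤ Y ω}) :=
        ENNReal.tsum_le_tsum fun j => by gcongr; exact hlevel j
    _ = ε * ∑' j, dyadicIncrement F j * μ {ω | 2 ^ (j - (1 : ℕ)) ≤ X ω}
          + ∑' j, dyadicIncrement F j * μ {ω | 2 ^ (j - (m + 1 : ℕ)) ≤ Y ω} := by
        rw [← ENNReal.tsum_mul_left, ← ENNReal.tsum_add]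
        exact tsum_congr fun j => by ring
    _ ≤ ε * (c ^ 2 * ∫⁻ ω, F (X ω) ∂μ) + c ^ (m + 2) * ∫⁻ ω, F (Y ω) ∂μ := by
        gcongr
        · exact tsum_dyadicIncrement_mul_le_lintegral hFmono hc hX 1
        · exact tsum_dyadicIncrement_mul_le_lintegral hFmono hc hY (m + 1)
    _ ≤ 2⁻¹ * ∫⁻ ω, F (X ω) ∂μ + c ^ (m + 2) * ∫⁻ ω, F (Y ω) ∂μ := by
        rw [← mul_assoc]
        gcongr

theorem lintegral_comp_le [IsFiniteMeasure μ] {m : ℕ}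
    (h : GoodLambdaInequality μ X Y ε (2 ^ (-(m : ℤ))))
    (hX : Measurable X) (hY : Measurable Y) (hFmono : Monotone F) (hFcont : Continuous F)
    (hF0 : F 0 = 0) {c : ℝ≥0} (hc : ∀ x, F (2 * x) ≤ c * F x) (hε : ε * c ^ 2 ≤ 2⁻¹) :
    ∫⁻ ω, F (X ω) ∂μ ≤ 2 * c ^ (m + 2) * ∫⁻ ω, F (Y ω) ∂μ := by
  have hsup : ∀ ω, F (X ω) = ⨆ N : ℕ, F (X ω ⊓ N) := fun ω => by
    rw [← hFmono.map_iSup_of_continuousAt hFcont.continuousAt hF0, ← inf_iSup_eq,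
      ENNReal.iSup_natCast, inf_top_eq]
  have hXN : ∀ N : ℕ, Measurable fun ω => X ω ⊓ N := fun N => hX.min measurable_const
  simp_rw [hsup]
  rw [lintegral_iSup (f := fun N ω => F (X ω ⊓ N)) (fun N => hFmono.measurable.comp (hXN N))
    fun N N' hN ω => hFmono (inf_le_inf_left _ (Nat.cast_le.mpr hN))]
  refine iSup_le fun N =>
    (h.inf_const N).lintegral_comp_le_of_ne_top (hXN N) hY hFmono hFcont hF0 hc hε ?_
  refine ne_top_of_le_ne_top ?_ (lintegral_mono fun ω => hFmono inf_le_right)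
  rw [lintegral_const]
  exact mul_ne_top (apply_ne_top_of_doubling hFmono hFcont.continuousAt hF0 hc (natCast_ne_top N))
    (measure_ne_top μ univ)

end GoodLambdaInequality

theorem measurable_iSup_of_monotone {Ω : Type*} [MeasurableSpace Ω] {X : ℝ≥0 → Ω → ℝ≥0∞}
    (hX : ∀ t, Measurable (X t)) (hmono : ∀ ω, Monotone fun t => X t ω) :
    Measurable fun ω => ⨆ t, X t ω := by
  simp_rw [← fun ω => (hmono ω).iSup_comp_tendsto_atTop tendsto_natCast_atTop_atTop]
  exact .iSup fun n => hX n

noncomputable def cappedHitting (f : ℝ≥0 → ℝ≥0∞) (a : ℝ≥0∞) (N : ℝ≥0) : ℝ≥0 :=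
  sInf {s | a ≤ f s ∨ N ≤ s}

section CappedHitting

variable {f : ℝ≥0 → ℝ≥0∞} {a : ℝ≥0∞} {N s t : ℝ≥0}

theorem cappedHitting_le_cap : cappedHitting f a N ≤ N :=
  csInf_le (OrderBot.bddBelow _) (Or.inr le_rfl)

theorem lt_of_lt_cappedHitting (h : s < cappedHitting f a N) : f s < a :=
  lt_of_not_ge fun hs => h.not_ge (csInf_le (OrderBot.bddBelow _) (Or.inl hs))

theorem cappedHitting_le_iff (hf : Monotone f) (hrc : ∀ t, Tendsto f (𝓝[>] t) (𝓝 (f t))) :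
    cappedHitting f a N ≤ t ↔ a ≤ f t ∨ N ≤ t := by
  refine ⟨fun h => ?_, fun h => csInf_le (OrderBot.bddBelow _) h⟩
  by_contra! hcon
  have hreach : ∀ u ∈ Ioo t N, a ≤ f u := fun u hu => by
    obtain ⟨s, hs, hsu⟩ := exists_lt_of_csInf_lt ⟨N, Or.inr le_rfl⟩ (h.trans_lt hu.1)
    exact (hs.resolve_right fun hNs => (hNs.trans hsu.le).not_gt hu.2).trans (hf hsu.le)
  exact hcon.1.not_ge (ge_of_tendsto (hrc t) (eventually_of_mem (Ioo_mem_nhdsGT hcon.2) hreach))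

theorem isStoppingTime_cappedHitting {Ω : Type*} {mΩ : MeasurableSpace Ω}
    {ℱ : Filtration ℝ≥0 mΩ} {X : ℝ≥0 → Ω → ℝ≥0∞} (hX : Adapted ℱ X)
    (hmono : ∀ ω, Monotone fun t => X t ω)
    (hrc : ∀ ω t, Tendsto (fun s => X s ω) (𝓝[>] t) (𝓝 (X t ω))) (a : ℝ≥0∞) (N : ℝ≥0) :
    IsStoppingTime ℱ fun ω => (cappedHitting (fun t => X t ω) a N : WithTop ℝ≥0) := by
  intro t
  have hset : {ω | (cappedHitting (fun t => X t ω) a N : WithTop ℝ≥0) ≤ t}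
      = {ω | a ≤ X t ω} ∪ {_ω | N ≤ t} := by
    ext ω
    simp only [mem_ofPred_eq, mem_union, WithTop.coe_le_coe, cappedHitting_le_iff (hmono ω) (hrc ω)]
  rw [hset]
  exact (hX t measurableSet_Ici).union (.const _)

end CappedHitting

-- `⨆ s < T ω, A s ω` is the left limit `A_{T-}` of the increasing process `A`.
def IncrementsDominated {Ω : Type*} {mΩ : MeasurableSpace Ω} (P : Measure Ω)
    (ℱ : Filtration ℝ≥0 mΩ) (A B : ℝ≥0 → Ω → ℝ≥0∞) (r : ℝ) (α : ℝ≥0) : Prop :=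
  ∀ S T : Ω → ℝ≥0, IsStoppingTime ℱ (fun ω => (S ω : WithTop ℝ≥0)) →
    IsStoppingTime ℱ (fun ω => (T ω : WithTop ℝ≥0)) → S ≤ T →
    ∫⁻ ω, ((⨆ (s : ℝ≥0) (_ : s < T ω), A s ω) - ⨆ (s : ℝ≥0) (_ : s < S ω), A s ω) ^ r ∂P
      ≤ α * ∫⁻ ω in {ω | S ω < T ω}, (⨆ (s : ℝ≥0) (_ : s < T ω), B s ω) ^ r ∂P

namespace IncrementsDominated

variable {Ω : Type*} [mΩ : MeasurableSpace Ω] {P : Measure Ω} {ℱ : Filtration ℝ≥0 mΩ}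
  {A B : ℝ≥0 → Ω → ℝ≥0∞} {r : ℝ} {α : ℝ≥0}

theorem measure_inter_le (hdom : IncrementsDominated P ℱ A B r α)
    (hA : Adapted ℱ A) (hB : Adapted ℱ B)
    (hAmono : ∀ ω, Monotone fun t => A t ω) (hBmono : ∀ ω, Monotone fun t => B t ω)
    (hArc : ∀ ω t, Tendsto (fun s => A s ω) (𝓝[>] t) (𝓝 (A t ω)))
    (hBrc : ∀ ω t, Tendsto (fun s => B s ω) (𝓝[>] t) (𝓝 (B t ω))) (hr : 0 ≤ r)
    {lam : ℝ≥0∞} (hlam₀ : 0 < lam) (hlam : lam ≠ ⊤) (δ : ℝ≥0∞) (n : ℕ) :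
    P ({ω | 2 * lam ≤ A n ω} ∩ {ω | ⨆ t, B t ω < δ * lam})
      ≤ α * δ ^ r * P {ω | lam ≤ ⨆ t, A t ω} := by
  set G := {ω | 2 * lam ≤ A n ω} ∩ {ω | ⨆ t, B t ω < δ * lam}
  -- The cap `n + 1` keeps `S, T` finite, and on `G` it forces `n < T`, so `A_{T-} ≥ A_n ≥ 2 lam`.
  set T : Ω → ℝ≥0 := fun ω => cappedHitting (fun t => B t ω) (δ * lam) (n + 1)
  set S : Ω → ℝ≥0 := fun ω => min (cappedHitting (fun t => A t ω) lam (n + 1)) (T ω)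
  have hT : IsStoppingTime ℱ fun ω => (T ω : WithTop ℝ≥0) :=
    isStoppingTime_cappedHitting hB hBmono hBrc _ _
  have hS : IsStoppingTime ℱ fun ω => (S ω : WithTop ℝ≥0) := by
    simpa only [S, WithTop.coe_min] using (isStoppingTime_cappedHitting hA hAmono hArc _ _).min hT
  have hBT : ∀ ω, ⨆ (s : ℝ≥0) (_ : s < T ω), B s ω ≤ δ * lam := fun ω =>
    iSup₂_le fun s hs => (lt_of_lt_cappedHitting hs).le
  have hAS : ∀ ω, ⨆ (s : ℝ≥0) (_ : s < S ω), A s ω ≤ lam := fun ω =>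
    iSup₂_le fun s hs => (lt_of_lt_cappedHitting (hs.trans_le (min_le_left _ _))).le
  have hSlt : {ω | S ω < T ω} ⊆ {ω | lam ≤ ⨆ t, A t ω} := fun ω hω => by
    have hτ : cappedHitting (fun t => A t ω) lam (n + 1) < n + 1 :=
      (min_lt_iff.mp hω).resolve_right (lt_irrefl _) |>.trans_le cappedHitting_le_cap
    have := ((cappedHitting_le_iff (hAmono ω) (hArc ω)).mp le_rfl).resolve_right hτ.not_ge
    exact this.trans (le_iSup (fun t => A t ω) _)
  have hG : ∀ ω ∈ G,
      lam ≤ (⨆ (s : ℝ≥0) (_ : s < T ω), A s ω) - ⨆ (s : ℝ≥0) (_ : s < S ω), A s ω := by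
    rintro ω ⟨hAn, hBsup⟩
    have hnT : (n : ℝ≥0) < T ω := lt_of_not_ge fun hTn => by
      rcases (cappedHitting_le_iff (hBmono ω) (hBrc ω)).mp hTn with h | h
      · exact (h.trans (le_iSup (fun t => B t ω) _)).not_gt hBsup
      · exact (lt_add_one (n : ℝ≥0)).not_ge h
    calc lam = 2 * lam - lam := by rw [two_mul, ENNReal.add_sub_cancel_right hlam]
      _ ≤ _ := tsub_le_tsub (hAn.trans (le_iSup₂_of_le (n : ℝ≥0) hnT le_rfl)) (hAS ω)
  have hGmeas : MeasurableSet G :=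
    ((hA n).mono (ℱ.le n) le_rfl measurableSet_Ici).inter
      (measurable_iSup_of_monotone (fun t => (hB t).mono (ℱ.le t) le_rfl) hBmono measurableSet_Iio)
  have key : lam ^ r * P G ≤ lam ^ r * (α * δ ^ r * P {ω | lam ≤ ⨆ t, A t ω}) :=
    calc lam ^ r * P G = ∫⁻ ω, G.indicator (fun _ => lam ^ r) ω ∂P :=
          (lintegral_indicator_const hGmeas _).symm
      _ ≤ ∫⁻ ω, ((⨆ (s : ℝ≥0) (_ : s < T ω), A s ω) - ⨆ (s : ℝ≥0) (_ : s < S ω), A s ω) ^ r ∂P :=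
          lintegral_mono (indicator_le fun ω hω => ENNReal.rpow_le_rpow (hG ω hω) hr)
      _ ≤ α * ∫⁻ ω in {ω | S ω < T ω}, (⨆ (s : ℝ≥0) (_ : s < T ω), B s ω) ^ r ∂P :=
          hdom S T hS hT fun ω => min_le_right _ _
      _ ≤ α * ∫⁻ _ in {ω | S ω < T ω}, (δ * lam) ^ r ∂P := by
          gcongr with ω
          exact hBT ω
      _ ≤ α * ((δ * lam) ^ r * P {ω | lam ≤ ⨆ t, A t ω}) := by
          rw [setLIntegral_const]
          gcongr
      _ = lam ^ r * (α * δ ^ r * P {ω | lam ≤ ⨆ t, A t ω}) := by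
          rw [ENNReal.mul_rpow_of_nonneg _ _ hr]
          ring
  exact (ENNReal.mul_le_mul_iff_right (ENNReal.rpow_pos hlam₀ hlam).ne'
    (ENNReal.rpow_ne_top_of_nonneg hr hlam)).mp key

theorem goodLambdaInequality (hdom : IncrementsDominated P ℱ A B r α)
    (hA : Adapted ℱ A) (hB : Adapted ℱ B)
    (hAmono : ∀ ω, Monotone fun t => A t ω) (hBmono : ∀ ω, Monotone fun t => B t ω)
    (hArc : ∀ ω t, Tendsto (fun s => A s ω) (𝓝[>] t) (𝓝 (A t ω)))
    (hBrc : ∀ ω t, Tendsto (fun s => B s ω) (𝓝[>] t) (𝓝 (B t ω))) (hr : 0 ≤ r)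
    (δ : ℝ≥0∞) :
    GoodLambdaInequality P (fun ω => ⨆ t, A t ω) (fun ω => ⨆ t, B t ω) (α * δ ^ r) δ := by
  intro lam hlam₀ hlam
  set G : ℕ → Set Ω := fun n => {ω | 2 * lam ≤ A n ω} ∩ {ω | ⨆ t, B t ω < δ * lam}
  have hcover : {ω | 2 * lam < ⨆ t, A t ω} ⊆ (⋃ n, G n) ∪ {ω | δ * lam ≤ ⨆ t, B t ω} := by
    rintro ω (hω : 2 * lam < ⨆ t, A t ω)
    by_cases hBsup : ⨆ t, B t ω < δ * lam
    · obtain ⟨t, ht⟩ := lt_iSup_iff.mp hω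
      exact Or.inl (mem_iUnion.mpr ⟨⌈t⌉₊, ht.le.trans (hAmono ω (Nat.le_ceil t)), hBsup⟩)
    · exact Or.inr (not_lt.mp hBsup)
  have hG : Monotone G := fun i j hij ω hω =>
    ⟨hω.1.trans (hAmono ω (Nat.cast_le.mpr hij)), hω.2⟩
  calc P {ω | 2 * lam < ⨆ t, A t ω} ≤ P (⋃ n, G n) + P {ω | δ * lam ≤ ⨆ t, B t ω} :=
        (measure_mono hcover).trans (measure_union_le _ _)
    _ ≤ α * δ ^ r * P {ω | lam ≤ ⨆ t, A t ω} + P {ω | δ * lam ≤ ⨆ t, B t ω} := by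
        rw [hG.directed_le.measure_iUnion]
        gcongr
        exact iSup_le fun n => hdom.measure_inter_le hA hB hAmono hBmono hArc hBrc hr hlam₀ hlam δ n

end IncrementsDominated

theorem exists_mul_rpow_two_zpow_neg_le {K ε : ℝ≥0∞} (hK : K ≠ ⊤) (hε : 0 < ε) {r : ℝ}
    (hr : 0 < r) : ∃ m : ℕ, K * (2 ^ (-(m : ℤ))) ^ r ≤ ε := by
  have hq : (2 : ℝ≥0∞)⁻¹ ^ r < 1 := ENNReal.rpow_lt_one (ENNReal.inv_lt_one.2 one_lt_two) hr
  have hlim : Tendsto (fun m : ℕ => K * ((2 : ℝ≥0∞)⁻¹ ^ r) ^ m) atTop (𝓝 0) := by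
    simpa using ENNReal.Tendsto.const_mul (tendsto_pow_atTop_nhds_zero_of_lt_one hq) (Or.inr hK)
  obtain ⟨m, hm⟩ := (hlim.eventually (gt_mem_nhds hε)).exists
  refine ⟨m, le_of_eq_of_le ?_ hm.le⟩
  rw [ENNReal.zpow_neg, zpow_natCast, ENNReal.inv_pow, ← ENNReal.rpow_natCast,
    ← ENNReal.rpow_mul, mul_comm (m : ℝ), ENNReal.rpow_mul, ENNReal.rpow_natCast]

theorem lenglart_lepingle_pratelli_general (r : ℝ) (hr : 0 < r) (α : ℝ≥0)
    (F : ℝ≥0∞ → ℝ≥0∞) (hFcont : Continuous F) (hFmono : Monotone F) (hF0 : F 0 = 0)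
    (hFmod : ∃ c : ℝ≥0, ∀ x : ℝ≥0∞, F (2 * x) ≤ c * F x) :
    ∃ C : ℝ≥0, ∀ {Ω : Type} [mΩ : MeasurableSpace Ω] (P : Measure Ω),
      IsProbabilityMeasure P → ∀ (ℱ : Filtration ℝ≥0 mΩ) (A B : ℝ≥0 → Ω → ℝ≥0∞),
      Adapted ℱ A → Adapted ℱ B →
      (∀ ω, Monotone fun t => A t ω) → (∀ ω, Monotone fun t => B t ω) →
      (∀ ω t, Tendsto (fun s => A s ω) (nhdsWithin t (Set.Ioi t)) (nhds (A t ω))) →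
      (∀ ω t, Tendsto (fun s => B s ω) (nhdsWithin t (Set.Ioi t)) (nhds (B t ω))) →
      (∀ S T : Ω → ℝ≥0, IsStoppingTime ℱ (fun ω => (S ω : WithTop ℝ≥0)) →
        IsStoppingTime ℱ (fun ω => (T ω : WithTop ℝ≥0)) → S ≤ T →
        ∫⁻ ω, ((⨆ (s : ℝ≥0) (_ : s < T ω), A s ω) - ⨆ (s : ℝ≥0) (_ : s < S ω), A s ω) ^ r ∂P
          ≤ α * ∫⁻ ω in {ω | S ω < T ω}, (⨆ (s : ℝ≥0) (_ : s < T ω), B s ω) ^ r ∂P) →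
      ∫⁻ ω, F (⨆ t, A t ω) ∂P ≤ C * ∫⁻ ω, F (⨆ t, B t ω) ∂P := by
  obtain ⟨c, hc⟩ := hFmod
  obtain ⟨m, hm⟩ := exists_mul_rpow_two_zpow_neg_le (K := α * c ^ 2) (ε := 2⁻¹)
    (by finiteness) (ENNReal.inv_pos.2 ofNat_ne_top) hr
  refine ⟨2 * c ^ (m + 2), fun P hP ℱ A B hA hB hAmono hBmono hArc hBrc hdom => ?_⟩
  have hgl := IncrementsDominated.goodLambdaInequality hdom hA hB hAmono hBmono hArc hBrc hr.le
    (2 ^ (-(m : ℤ)))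
  have hmeas {X : ℝ≥0 → _ → ℝ≥0∞} (hX : Adapted ℱ X) (hmono : ∀ ω, Monotone fun t => X t ω) :=
    measurable_iSup_of_monotone (fun t => (hX t).mono (ℱ.le t) le_rfl) hmono
  push_cast
  exact hgl.lintegral_comp_le (hmeas hA hAmono) (hmeas hB hBmono) hFmono hFcont hF0 hc
    (by rwa [mul_right_comm])

/-- Lemma of Lenglart–Lépingle–Pratelli (Lemma 4.11): if `A`, `B` are adapted increasing
right-continuous processes such that `E(A_(T-) − A_(S-))^r ≤ α E[B_(T-)^r 1_(S<T)]` for all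
stopping times `S ≤ T`, then `E F(A_∞) ≲_(r,α,F) E F(B_∞)` for every moderate function `F`.
Here left limits of increasing processes are realized as `sup` over earlier times. -/
theorem lenglart_lepingle_pratelli (r : ℝ) (hr : 0 < r) (α : ℝ≥0) (hα : 0 < α)
    (F : ℝ≥0∞ → ℝ≥0∞) (hFcont : Continuous F) (hFmono : Monotone F) (hF0 : F 0 = 0)
    (hFmod : ∃ c : ℝ≥0, ∀ x : ℝ≥0∞, F (2 * x) ≤ c * F x) :
    ∃ C : ℝ≥0, ∀ {Ω : Type} [mΩ : MeasurableSpace Ω] (P : Measure Ω),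
      IsProbabilityMeasure P → ∀ (ℱ : Filtration ℝ≥0 mΩ) (A B : ℝ≥0 → Ω → ℝ≥0∞),
      Adapted ℱ A → Adapted ℱ B →
      (∀ ω, Monotone fun t => A t ω) → (∀ ω, Monotone fun t => B t ω) →
      (∀ ω t, Tendsto (fun s => A s ω) (nhdsWithin t (Set.Ioi t)) (nhds (A t ω))) →
      (∀ ω t, Tendsto (fun s => B s ω) (nhdsWithin t (Set.Ioi t)) (nhds (B t ω))) →
      (∀ S T : Ω → ℝ≥0, IsStoppingTime ℱ (fun ω => (S ω : WithTop ℝ≥0)) →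
        IsStoppingTime ℱ (fun ω => (T ω : WithTop ℝ≥0)) → S ≤ T →
        ∫⁻ ω, ((⨆ (s : ℝ≥0) (_ : s < T ω), A s ω) - ⨆ (s : ℝ≥0) (_ : s < S ω), A s ω) ^ r ∂P
          ≤ α * ∫⁻ ω in {ω | S ω < T ω}, (⨆ (s : ℝ≥0) (_ : s < T ω), B s ω) ^ r ∂P) →
      ∫⁻ ω, F (⨆ t, A t ω) ∂P ≤ C * ∫⁻ ω, F (⨆ t, B t ω) ∂P :=
  lenglart_lepingle_pratelli_general r hr α F hFcont hFmono hF0 hFmod
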